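/- arXiv:1610.02452 — 3 statements merged into one kernel-verified Lean document; each statement's English description precedes it below -/
import Mathlib

section
/- Let f : [0,1] → ℝ be four times continuously differentiable and α > 0. Suppose (1/α)·f''''(s) = (f'(s))²·f''(s) for all s ∈ [0,1], together with the boundary conditions f''(0) = 0, f'''(0) = 0, f'(1) = 0, f''(1) = 0. Then f is constant on [0,1]. -/
/-!
Since `α ≠ 0`, the function `y = f''` solves the linear equation `y'' = α (f')² y` with
`y(0) = y'(0) = 0`, so `y ≡ 0` on `[0, 1]` by uniqueness for linear ODEs with continuous
coefficients. Then `f'` is constant and vanishes at `1`, so `f` is constant.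
-/

open Set
open scoped NNReal

section SecondOrderLinearODE

variable {E : Type*} [NormedAddCommGroup E] [NormedSpace ℝ E]

theorem lipschitzWith_companion {c : ℝ} {K : ℝ≥0} (hc : ‖c‖ ≤ K) :
    LipschitzWith (max 1 K) fun p : E × E => (p.2, c • p.1) := by
  have h := (LipschitzWith.prod_snd (α := E) (β := E)).prodMk
    ((lipschitzWith_smul (β := E) c).comp LipschitzWith.prod_fst)
  rw [mul_one] at h
  exact h.weaken (max_le_max le_rfl (mod_cast hc))

/-- As a first-order system `(y, y')' = (y', q y)`, whose right-hand side is Lipschitz in the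
state uniformly in `t` because `q` is bounded on the compact interval. -/
theorem ODE_linear_second_order_eqOn_zero {y y' : ℝ → E} {q : ℝ → ℝ} {a b : ℝ}
    (hq : ContinuousOn q (Icc a b)) (hy : ContinuousOn y (Icc a b))
    (hy' : ContinuousOn y' (Icc a b))
    (hdy : ∀ t ∈ Ico a b, HasDerivWithinAt y (y' t) (Ici t) t)
    (hdy' : ∀ t ∈ Ico a b, HasDerivWithinAt y' (q t • y t) (Ici t) t)
    (ha : y a = 0) (ha' : y' a = 0) : EqOn y 0 (Icc a b) := by
  obtain ⟨C, hC⟩ := isCompact_Icc.exists_bound_of_continuousOn hq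
  have hlip : ∀ t ∈ Ico a b,
      LipschitzOnWith (max 1 C.toNNReal) (fun p : E × E => (p.2, q t • p.1)) univ :=
    fun t ht => (lipschitzWith_companion
      ((hC t (Ico_subset_Icc_self ht)).trans (Real.le_coe_toNNReal C))).lipschitzOnWith
  have hsol := ODE_solution_unique_of_mem_Icc_right (v := fun t p => (p.2, q t • p.1))
    (f := fun t => (y t, y' t)) (g := fun _ => ((0 : E), (0 : E))) hlip (hy.prodMk hy')
    (fun t ht => (hdy t ht).prodMk (hdy' t ht)) (fun _ _ => mem_univ _) continuousOn_const
    (fun t _ => (hasDerivWithinAt_const t (Ici t) _).congr_deriv (by ext <;> simp))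
    (fun _ _ => mem_univ _) (by simp [ha, ha'])
  exact fun t ht => congrArg Prod.fst (hsol ht)

end SecondOrderLinearODE

theorem iteratedDeriv_eqOn_of_iteratedDeriv_succ_eqOn_zero {f : ℝ → ℝ} {n : ℕ} {a b : ℝ}
    (hf : Differentiable ℝ (iteratedDeriv n f)) (h : EqOn (iteratedDeriv (n + 1) f) 0 (Icc a b)) :
    ∀ x ∈ Icc a b, iteratedDeriv n f x = iteratedDeriv n f a := by
  refine constant_of_has_deriv_right_zero hf.continuous.continuousOn fun x hx => ?_
  have hx' := (hf x).hasDerivAt.hasDerivWithinAt (s := Ici x)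
  rwa [← iteratedDeriv_succ, h (Ico_subset_Icc_self hx)] at hx'

theorem leading_order_flagellum_constant_general (f : ℝ → ℝ) (α : ℝ) (hα : 0 < α)
    (hf : ContDiff ℝ 4 f)
    (heq : ∀ s ∈ Icc (0:ℝ) 1,
      (1 / α) * iteratedDeriv 4 f s = (deriv f s) ^ 2 * iteratedDeriv 2 f s)
    (h20 : iteratedDeriv 2 f 0 = 0) (h30 : iteratedDeriv 3 f 0 = 0)
    (h11 : deriv f 1 = 0) :
    ∀ s ∈ Icc (0:ℝ) 1, f s = f 0 := by
  have hdiff : ∀ n < 4, Differentiable ℝ (iteratedDeriv n f) := fun n hn =>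
    hf.differentiable_iteratedDeriv n (by exact_mod_cast hn)
  have hder : ∀ n < 4, ∀ t, HasDerivAt (iteratedDeriv n f) (iteratedDeriv (n + 1) f t) t :=
    fun n hn t => by rw [iteratedDeriv_succ]; exact (hdiff n hn t).hasDerivAt
  have h4 : ∀ s ∈ Icc (0:ℝ) 1,
      iteratedDeriv 4 f s = (α * deriv f s ^ 2) • iteratedDeriv 2 f s := fun s hs => by
    rw [smul_eq_mul, mul_assoc, ← heq s hs]
    field_simp [hα.ne']
  have h2 : EqOn (iteratedDeriv 2 f) 0 (Icc 0 1) := by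
    refine ODE_linear_second_order_eqOn_zero (q := fun t => α * deriv f t ^ 2)
      (continuous_const.mul ((hf.continuous_deriv (by norm_num)).pow 2)).continuousOn
      (hdiff 2 (by norm_num)).continuous.continuousOn
      (hdiff 3 (by norm_num)).continuous.continuousOn
      (fun t _ => (hder 2 (by norm_num) t).hasDerivWithinAt) (fun t ht => ?_) h20 h30
    rw [← h4 t (Ico_subset_Icc_self ht)]
    exact (hder 3 (by norm_num) t).hasDerivWithinAt
  have h1 : EqOn (iteratedDeriv 1 f) 0 (Icc 0 1) := fun s hs => by
    have hconst := iteratedDeriv_eqOn_of_iteratedDeriv_succ_eqOn_zero (hdiff 1 (by norm_num)) h2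
    rw [hconst s hs, ← hconst 1 (right_mem_Icc.2 zero_le_one), iteratedDeriv_one, h11,
      Pi.zero_apply]
  simpa using iteratedDeriv_eqOn_of_iteratedDeriv_succ_eqOn_zero (hdiff 0 (by norm_num)) h1

theorem leading_order_flagellum_constant (f : ℝ → ℝ) (α : ℝ) (hα : 0 < α)
    (hf : ContDiff ℝ 4 f)
    (heq : ∀ s ∈ Icc (0:ℝ) 1,
      (1 / α) * iteratedDeriv 4 f s = (deriv f s) ^ 2 * iteratedDeriv 2 f s)
    (h20 : iteratedDeriv 2 f 0 = 0) (h30 : iteratedDeriv 3 f 0 = 0)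
    (h11 : deriv f 1 = 0) (h21 : iteratedDeriv 2 f 1 = 0) :
    ∀ s ∈ Icc (0:ℝ) 1, f s = f 0 :=
  leading_order_flagellum_constant_general f α hα hf heq h20 h30 h11
end

section
/- Let α, β, r, kᵣ, σ > 0 and define b = βr(2σkᵣ + 2 − 3αkᵣ)/(2rσkᵣ + 2r + 3αkᵣ). Suppose a differentiable function θ : ℝ → ℝ satisfies [1 + 3αkᵣ/(2r(σkᵣ+1))]·(θ'(t) + sin²θ(t)) = −β·[1 − 3αkᵣ/(2(σkᵣ+1))]·cos(2θ(t)) for all t. Then θ satisfies the Jeffery equation θ'(t) = −(1−b)·sin²θ(t) − b·cos²θ(t) for all t. -/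
open Real

theorem neg_sin_sq_sub_mul_cos_two_mul (B x : ℝ) :
    -sin x ^ 2 - B * cos (2 * x) = -(1 - B) * sin x ^ 2 - B * cos x ^ 2 := by
  rw [cos_two_mul']
  ring

theorem jeffery_of_mul_eq_neg_mul_cos_two_mul {c d y x : ℝ} (hc : c ≠ 0)
    (h : c * (y + sin x ^ 2) = -d * cos (2 * x)) :
    y = -(1 - d / c) * sin x ^ 2 - d / c * cos x ^ 2 := by
  have hy : y = -sin x ^ 2 - d / c * cos (2 * x) := by
    field_simp
    linear_combination h
  rw [hy, neg_sin_sq_sub_mul_cos_two_mul]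

theorem modified_jeffery_closure_general (α β r kr σ : ℝ)
    (hα : 0 < α) (hr : 0 < r) (hkr : 0 < kr) (hσ : 0 < σ)
    (b : ℝ) (hb : b = β * r * (2 * σ * kr + 2 - 3 * α * kr) / (2 * r * σ * kr + 2 * r + 3 * α * kr))
    (θ : ℝ → ℝ)
    (heq : ∀ t : ℝ,
      (1 + 3 * α * kr / (2 * r * (σ * kr + 1))) * (deriv θ t + Real.sin (θ t) ^ 2) =
        -β * (1 - 3 * α * kr / (2 * (σ * kr + 1))) * Real.cos (2 * θ t)) :
    ∀ t : ℝ, deriv θ t = -(1 - b) * Real.sin (θ t) ^ 2 - b * Real.cos (θ t) ^ 2 := by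
  have hbracket : 1 + 3 * α * kr / (2 * r * (σ * kr + 1)) ≠ 0 := by positivity
  have hb' : b = β * (1 - 3 * α * kr / (2 * (σ * kr + 1))) /
      (1 + 3 * α * kr / (2 * r * (σ * kr + 1))) := by
    rw [hb]
    field_simp
  intro t
  rw [hb']
  exact jeffery_of_mul_eq_neg_mul_cos_two_mul hbracket (by linear_combination heq t)

theorem modified_jeffery_closure (α β r kr σ : ℝ)
    (hα : 0 < α) (hβ : 0 < β) (hr : 0 < r) (hkr : 0 < kr) (hσ : 0 < σ)
    (b : ℝ) (hb : b = β * r * (2 * σ * kr + 2 - 3 * α * kr) / (2 * r * σ * kr + 2 * r + 3 * α * kr))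
    (θ : ℝ → ℝ) (hθ : Differentiable ℝ θ)
    (heq : ∀ t : ℝ,
      (1 + 3 * α * kr / (2 * r * (σ * kr + 1))) * (deriv θ t + Real.sin (θ t) ^ 2) =
        -β * (1 - 3 * α * kr / (2 * (σ * kr + 1))) * Real.cos (2 * θ t)) :
    ∀ t : ℝ, deriv θ t = -(1 - b) * Real.sin (θ t) ^ 2 - b * Real.cos (θ t) ^ 2 :=
  modified_jeffery_closure_general α β r kr σ hα hr hkr hσ b hb θ heq
end

section
/- Let 0 < β < 1/2, r > 0, b = rβ/(1+2r), and q = √(1 − (1−2b)²). Then Z_prop(β,r) := β·r·(17+10r)·(2r+1 − q·√(2r+1)) / (120·(2r+1−βr)²) is strictly positive. -/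
theorem Z_prop_positive (β r : ℝ) (hβ0 : 0 < β) (hβ1 : β < 1/2) (hr : 0 < r)
    (b q : ℝ) (hb : b = r * β / (1 + 2 * r))
    (hq : q = Real.sqrt (1 - (1 - 2 * b) ^ 2)) :
    0 < β * r * (17 + 10 * r) * (2 * r + 1 - q * Real.sqrt (2 * r + 1)) /
        (120 * (2 * r + 1 - β * r) ^ 2) := by
  have hs : Real.sqrt (2 * r + 1) > 1 := by
    exact (Real.lt_sqrt (by norm_num)).mpr (by nlinarith)
  have hq1 : q ≤ 1 := by
    rw [hq]
    exact Real.sqrt_le_one.mpr (by nlinarith [sq_nonneg (1 - 2*b)])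
  have hq0 : 0 ≤ q := hq ▸ Real.sqrt_nonneg _
  have hkey : q * Real.sqrt (2 * r + 1) < 2 * r + 1 := by
    have h2 : q * Real.sqrt (2 * r + 1) ≤ Real.sqrt (2 * r + 1) := by
      nlinarith
    have h3 : Real.sqrt (2 * r + 1) * Real.sqrt (2 * r + 1) = 2 * r + 1 :=
      Real.mul_self_sqrt (by linarith)
    nlinarith
  have hden : 0 < 2 * r + 1 - β * r := by nlinarith
  have hnum : 0 < β * r * (17 + 10 * r) * (2 * r + 1 - q * Real.sqrt (2 * r + 1)) := by
    apply mul_pos; apply mul_pos; positivity; linarith; linarith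
  positivity
end
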